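/- Let (k_δ) be the re-indexed Haar-type system k_δ = r_{φ(δ)} ∏_{i=1}^n (1 + δ_i r_{φ(δ₁,…,δ_{i−1})}) with φ injective and increasing along prefixes, and let T_ε be the biased coin (Riesz product convolution) operator. Then the images T_ε k_δ = ε r_{φ(δ)} ∏_{i=1}^n (1 + ε δ_i r_{φ(δ₁,…,δ_{i−1})}), arranged in any order compatible with prefix length, form a martingale difference sequence in L¹ of the Cantor group, and hence a basic sequence with basis constant at most 1 (monotone); consequently the biorthogonal functionals to {T_ε k_δ} all have norm at most 2/ε. -/

import Mathlib

/-!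
Expanding the products into Walsh functions, `T_ε` acts on `k_δ` term by term and the
expansion resums to `ε r_{φ(δ)} ∏ (1 + ε δ_i r_{φ(δ₁,…,δ_{i−1})})`. This is `r_{φ(δ)}` times a
polynomial in Rademachers indexed by proper prefixes of `δ`. The moment condition on `μ` makes
`r_j` orthogonal to every polynomial in the other Rademachers, and indicators of cylinder sets in
finitely many coordinates are such polynomials; hence the conditional expectation of `T_ε k_δ`
given any finite set of other coordinates vanishes. Conditional expectation contracts `L¹`, so
the partial sums have increasing `L¹` norm. Finally all factors `1 ± ε` are nonnegative and the
products integrate to `1`, so `‖T_ε k_δ‖₁ = ε`, and writing `a_k T_ε k_{u k} = S_{k+1} − S_k`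
gives the bound `2 / ε`.
-/

open MeasureTheory

/-- The Cantor group `{−1,1}^ℕ`, modelled as `ℕ → ℤˣ`. -/
abbrev CantorGroup : Type := ℕ → ℤˣ

/-- The Rademacher function `r_j` (coordinate projection). -/
noncomputable def rad (j : ℕ) (ω : CantorGroup) : ℝ := ((ω j : ℤ) : ℝ)

/-- Interpret a boolean as a sign `±1`. -/
noncomputable def sgn (b : Bool) : ℝ := if b then 1 else -1

/-- The Walsh function `w_A = ∏_{i ∈ A} r_i`. -/
noncomputable def walsh (A : Finset ℕ) (ω : CantorGroup) : ℝ := ∏ j ∈ A, rad j ω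

/-- The auxiliary index map: `ρ(∅) = 1`, `ρ(δ) = φ(δ)` for nonempty `δ`. -/
noncomputable def rho (φ : List Bool → ℕ) (δ : List Bool) : ℕ := if δ = [] then 1 else φ δ

/-- The re-indexed Haar-type system
`k_δ = r_{φ(δ)} ∏_{i=1}^n (1 + δ_i r_{φ(δ₁,…,δ_{i−1})})`. -/
noncomputable def kSys (φ : List Bool → ℕ) (δ : List Bool) (ω : CantorGroup) : ℝ :=
  rad (rho φ δ) ω *
    ∏ i ∈ Finset.range δ.length, (1 + sgn (δ.getD i true) * rad (rho φ (δ.take i)) ω)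

/-- The σ-algebra generated by the coordinates `{r_{φ(η)} : η of length < n}`. -/
noncomputable def Gsig (φ : List Bool → ℕ) (n : ℕ) : MeasurableSpace CantorGroup :=
  MeasurableSpace.comap
    (fun ω => fun δ : {l : List Bool // l.length < n} => ω (rho φ δ.1)) inferInstance


section MartingaleDifference

variable {Ω : Type*} {m0 : MeasurableSpace Ω} {μ : Measure Ω} {d : ℕ → Ω → ℝ}

/-- `μ[S_{n+1} | m n] = S_n` for the partial sums `S_n`, and conditional expectation
contracts `L¹`. -/
theorem monotone_integral_abs_sum_of_condExp_eq_zero [IsFiniteMeasure μ]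
    {m : ℕ → MeasurableSpace Ω} (hm : ∀ k, m k ≤ m0) (hd : ∀ k, Integrable (d k) μ)
    (hpast : ∀ j k, j < k → Measurable[m k] (d j)) (hcond : ∀ k, μ[d k | m k] =ᵐ[μ] 0)
    (a : ℕ → ℝ) : Monotone fun n => ∫ ω, |∑ k ∈ Finset.range n, a k * d k ω| ∂μ := by
  refine monotone_nat_of_le_succ fun n => ?_
  set S : Ω → ℝ := fun ω => ∑ k ∈ Finset.range n, a k * d k ω
  have hS : Integrable S μ := integrable_finsetSum _ fun k _ => (hd k).const_mul (a k)
  have hSm : StronglyMeasurable[m n] S := (Finset.measurable_sum _ fun k hk =>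
    (hpast k n (Finset.mem_range.mp hk)).const_mul (a k)).stronglyMeasurable
  have hsucc : (fun ω => ∑ k ∈ Finset.range (n + 1), a k * d k ω) = S + a n • d n := by
    funext ω; simp [S, Finset.sum_range_succ]
  have hproj : μ[S + a n • d n | m n] =ᵐ[μ] S := by
    filter_upwards [condExp_add hS ((hd n).smul (a n)) (m n), condExp_smul (a n) (d n) (m n),
      hcond n] with ω hadd hsmul hzero
    rw [hadd, Pi.add_apply, condExp_of_stronglyMeasurable (hm n) hSm hS, hsmul]
    simp [hzero]
  calc ∫ ω, |S ω| ∂μ = ∫ ω, |μ[S + a n • d n | m n] ω| ∂μ :=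
        integral_congr_ae (hproj.mono fun ω h => by simp only [h])
    _ ≤ _ := hsucc ▸ integral_abs_condExp_le _

theorem abs_mul_integral_abs_le_of_monotone (hd : ∀ k, Integrable (d k) μ) {a : ℕ → ℝ}
    (hmono : Monotone fun n => ∫ ω, |∑ k ∈ Finset.range n, a k * d k ω| ∂μ) {k n : ℕ}
    (hkn : k < n) :
    |a k| * ∫ ω, |d k ω| ∂μ ≤ 2 * ∫ ω, |∑ j ∈ Finset.range n, a j * d j ω| ∂μ := by
  set N := fun n => ∫ ω, |∑ k ∈ Finset.range n, a k * d k ω| ∂μ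
  have hS : ∀ n, Integrable (fun ω => ∑ k ∈ Finset.range n, a k * d k ω) μ := fun n =>
    integrable_finsetSum _ fun k _ => (hd k).const_mul (a k)
  have htri : ∫ ω, |a k * d k ω| ∂μ ≤ N (k + 1) + N k := by
    rw [← integral_add (hS _).abs (hS _).abs]
    refine integral_mono ((hd k).const_mul _).abs ((hS _).abs.add (hS _).abs) fun ω => ?_
    set Sk := ∑ j ∈ Finset.range k, a j * d j ω
    simpa [Finset.sum_range_succ] using abs_sub (Sk + a k * d k ω) Sk
  calc |a k| * ∫ ω, |d k ω| ∂μ = ∫ ω, |a k * d k ω| ∂μ := by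
        simp only [abs_mul, integral_const_mul]
    _ ≤ N n + N n := htri.trans (add_le_add (hmono hkn) (hmono hkn.le))
    _ = 2 * N n := by ring

end MartingaleDifference

lemma rad_eq_one_or_neg_one (j : ℕ) (ω : CantorGroup) : rad j ω = 1 ∨ rad j ω = -1 := by
  unfold rad; rcases Int.units_eq_one_or (ω j) with h | h <;> simp [h]

lemma rad_mul_self (j : ℕ) (ω : CantorGroup) : rad j ω * rad j ω = 1 := by
  rcases rad_eq_one_or_neg_one j ω with h | h <;> simp [h]

lemma abs_rad (j : ℕ) (ω : CantorGroup) : |rad j ω| = 1 := by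
  rcases rad_eq_one_or_neg_one j ω with h | h <;> simp [h]

lemma abs_sgn (b : Bool) : |sgn b| = 1 := by
  cases b <;> simp [sgn]

lemma measurable_units_int_cast : Measurable fun e : ℤˣ => ((e : ℤ) : ℝ) :=
  measurable_from_top.comp (comap_measurable Units.val)

lemma measurable_rad (j : ℕ) : Measurable (rad j) :=
  measurable_units_int_cast.comp (measurable_pi_apply j)

lemma walsh_empty : walsh ∅ = 1 := by
  funext ω; simp [walsh]

lemma walsh_singleton (j : ℕ) : walsh {j} = rad j := by
  funext ω; simp [walsh]

lemma rad_mul_walsh {j : ℕ} {A : Finset ℕ} (hj : j ∉ A) :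
    rad j * walsh A = walsh (insert j A) := by
  funext ω; simp [walsh, Finset.prod_insert hj]

lemma walsh_mul_walsh (A B : Finset ℕ) : walsh A * walsh B = walsh (symmDiff A B) := by
  classical
  funext ω
  have hsq : walsh (A ∩ B) ω * walsh (A ∩ B) ω = 1 := by
    rw [walsh, ← Finset.prod_mul_distrib]; exact Finset.prod_eq_one fun j _ => rad_mul_self j ω
  have split : ∀ X Y : Finset ℕ, walsh X ω = walsh (X \ Y) ω * walsh (X ∩ Y) ω := fun X Y => by
    rw [walsh, walsh, walsh, ← Finset.prod_union (Finset.disjoint_sdiff_inter X Y),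
      Finset.sdiff_union_inter]
  have hsymm : walsh (symmDiff A B) ω = walsh (A \ B) ω * walsh (B \ A) ω := by
    rw [walsh, symmDiff_def, Finset.sup_eq_union, Finset.prod_union disjoint_sdiff_sdiff]; rfl
  rw [Pi.mul_apply, split A B, split B A, Finset.inter_comm B A, hsymm]
  linear_combination (walsh (A \ B) ω * walsh (B \ A) ω) * hsq

lemma integrable_walsh (μ : Measure CantorGroup) [IsFiniteMeasure μ] (A : Finset ℕ) :
    Integrable (walsh A) μ := by
  refine (integrable_const (1 : ℝ)).mono'
    (Finset.measurable_prod A fun j _ => measurable_rad j).aestronglyMeasurable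
    (ae_of_all _ fun ω => ?_)
  rw [Real.norm_eq_abs, walsh, Finset.abs_prod, Finset.prod_eq_one fun j _ => abs_rad j ω]

lemma integrable_rad_mul {μ : Measure CantorGroup} (j : ℕ) {g : CantorGroup → ℝ}
    (hg : Integrable g μ) : Integrable (fun ω => rad j ω * g ω) μ :=
  hg.bdd_mul (measurable_rad j).aestronglyMeasurable
    (ae_of_all _ fun ω => (Real.norm_eq_abs _ ▸ abs_rad j ω).le)

def walshSpan (S : Set ℕ) : Submodule ℝ (CantorGroup → ℝ) :=
  Submodule.span ℝ {g | ∃ A : Finset ℕ, ↑A ⊆ S ∧ walsh A = g}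

section RademacherAlgebra

variable {S : Set ℕ} {f : CantorGroup → ℝ}

lemma adjoin_rad_le_walshSpan :
    Subalgebra.toSubmodule (Algebra.adjoin ℝ (rad '' S)) ≤ walshSpan S := by
  rw [Algebra.adjoin_eq_span]
  refine Submodule.span_mono fun g hg => ?_
  induction hg using Submonoid.closure_induction with
  | mem g hg =>
    obtain ⟨j, hj, rfl⟩ := hg
    exact ⟨{j}, by simpa using hj, walsh_singleton j⟩
  | one => exact ⟨∅, by simp, walsh_empty⟩
  | mul g h _ _ hg hh =>
    obtain ⟨A, hA, rfl⟩ := hg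
    obtain ⟨B, hB, rfl⟩ := hh
    refine ⟨symmDiff A B, ?_, (walsh_mul_walsh A B).symm⟩
    rw [Finset.coe_symmDiff]
    exact symmDiff_le_sup.trans (sup_le hA hB)

lemma integrable_of_mem_walshSpan (μ : Measure CantorGroup) [IsFiniteMeasure μ]
    (hf : f ∈ walshSpan S) : Integrable f μ := by
  induction hf using Submodule.span_induction with
  | mem g hg => obtain ⟨A, -, rfl⟩ := hg; exact integrable_walsh μ A
  | zero => exact integrable_zero _ _ _
  | add g h _ _ hg hh => exact hg.add hh
  | smul c g _ hg => exact hg.smul c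

lemma integral_rad_mul_eq_zero_of_mem_walshSpan {μ : Measure CantorGroup} [IsFiniteMeasure μ]
    (hμ : ∀ A : Finset ℕ, A.Nonempty → ∫ ω, walsh A ω ∂μ = 0) {j : ℕ} (hj : j ∉ S)
    (hf : f ∈ walshSpan S) : ∫ ω, rad j ω * f ω ∂μ = 0 := by
  induction hf using Submodule.span_induction with
  | mem g hg =>
    obtain ⟨A, hA, rfl⟩ := hg
    have hjA : j ∉ A := fun h => hj (hA h)
    simpa [← Pi.mul_apply, rad_mul_walsh hjA] using hμ _ (Finset.insert_nonempty j A)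
  | zero => simp
  | add g h hg' hh' hg hh =>
    simp only [Pi.add_apply, mul_add]
    rw [integral_add (integrable_rad_mul j (integrable_of_mem_walshSpan μ hg'))
      (integrable_rad_mul j (integrable_of_mem_walshSpan μ hh')), hg, hh, add_zero]
  | smul c g _ hg =>
    simp only [Pi.smul_apply, smul_eq_mul, mul_left_comm _ c]
    rw [integral_const_mul, hg, mul_zero]

lemma integrable_of_mem_adjoin_rad (μ : Measure CantorGroup) [IsFiniteMeasure μ]
    (hf : f ∈ Algebra.adjoin ℝ (rad '' S)) : Integrable f μ :=
  integrable_of_mem_walshSpan μ (adjoin_rad_le_walshSpan hf)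

lemma integral_rad_mul_eq_zero_of_mem_adjoin {μ : Measure CantorGroup} [IsFiniteMeasure μ]
    (hμ : ∀ A : Finset ℕ, A.Nonempty → ∫ ω, walsh A ω ∂μ = 0) {j : ℕ} (hj : j ∉ S)
    (hf : f ∈ Algebra.adjoin ℝ (rad '' S)) : ∫ ω, rad j ω * f ω ∂μ = 0 :=
  integral_rad_mul_eq_zero_of_mem_walshSpan hμ hj (adjoin_rad_le_walshSpan hf)

lemma measurable_of_mem_adjoin_rad {m : MeasurableSpace CantorGroup}
    (hS : ∀ j ∈ S, Measurable[m] (rad j)) (hf : f ∈ Algebra.adjoin ℝ (rad '' S)) :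
    Measurable[m] f := by
  induction hf using Algebra.adjoin_induction with
  | mem g hg => obtain ⟨j, hj, rfl⟩ := hg; exact hS j hj
  | algebraMap c => exact measurable_const
  | add g h _ _ hg hh => exact hg.add hh
  | mul g h _ _ hg hh => exact hg.mul hh

end RademacherAlgebra

lemma prod_one_add_mul_rad_mem_adjoin {α : Type*} (s : Finset α) (c : α → ℝ) (ι : α → ℕ) :
    (fun ω => ∏ i ∈ s, (1 + c i * rad (ι i) ω)) ∈ Algebra.adjoin ℝ (rad '' (ι '' s)) := by
  have hfun : (fun ω => ∏ i ∈ s, (1 + c i * rad (ι i) ω)) =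
      ∏ i ∈ s, (1 + c i • rad (ι i)) := by
    funext ω; simp [Finset.prod_apply]
  rw [hfun]
  refine Subalgebra.prod_mem _ fun i hi => add_mem (one_mem _) (Subalgebra.smul_mem _ ?_ _)
  exact Algebra.subset_adjoin ⟨ι i, ⟨i, hi, rfl⟩, rfl⟩

section RieszProduct

variable {α : Type*} {s : Finset α} {ι : α → ℕ}

lemma integral_prod_one_add_mul_rad {μ : Measure CantorGroup} [IsProbabilityMeasure μ]
    (hμ : ∀ A : Finset ℕ, A.Nonempty → ∫ ω, walsh A ω ∂μ = 0) (hι : Set.InjOn ι s)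
    (c : α → ℝ) : ∫ ω, ∏ i ∈ s, (1 + c i * rad (ι i) ω) ∂μ = 1 := by
  classical
  induction s using Finset.induction_on with
  | empty => simp
  | insert x s hx ih =>
    have hιs : Set.InjOn ι s := hι.mono (by simp)
    have hxs : ι x ∉ ι '' s := fun ⟨y, hy, hyx⟩ =>
      hx (hι (by simp [hy]) (by simp) hyx ▸ hy)
    have hmem := prod_one_add_mul_rad_mem_adjoin s c ι
    simp only [Finset.prod_insert hx, add_mul, one_mul, mul_assoc]
    rw [integral_add (integrable_of_mem_adjoin_rad μ hmem)
        ((integrable_rad_mul _ (integrable_of_mem_adjoin_rad μ hmem)).const_mul _),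
      integral_const_mul, integral_rad_mul_eq_zero_of_mem_adjoin hμ hxs hmem, ih hιs]
    simp

lemma prod_one_add_mul_rad_eq_sum_walsh (hι : Set.InjOn ι s) (c : α → ℝ) :
    (fun ω => ∏ i ∈ s, (1 + c i * rad (ι i) ω)) =
      ∑ t ∈ s.powerset, (∏ i ∈ t, c i) • walsh (t.image ι) := by
  classical
  funext ω
  simp only [add_comm (1 : ℝ), Finset.prod_add, Finset.prod_const_one, mul_one,
    Finset.sum_apply, Pi.smul_apply, smul_eq_mul]
  refine Finset.sum_congr rfl fun t ht => ?_
  rw [walsh, Finset.prod_image (hι.mono (Finset.mem_powerset.mp ht)), Finset.prod_mul_distrib]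

lemma map_rad_mul_prod_one_add_mul_rad {ε : ℝ}
    {T : (CantorGroup → ℝ) →ₗ[ℝ] (CantorGroup → ℝ)}
    (hT : ∀ A : Finset ℕ, T (walsh A) = fun ω => ε ^ A.card * walsh A ω) {j : ℕ}
    (hι : Set.InjOn ι s) (hj : j ∉ ι '' s) (c : α → ℝ) :
    T (fun ω => rad j ω * ∏ i ∈ s, (1 + c i * rad (ι i) ω)) =
      fun ω => ε * rad j ω * ∏ i ∈ s, (1 + ε * c i * rad (ι i) ω) := by
  have hjt : ∀ t ∈ s.powerset, j ∉ t.image ι := fun t ht h => hj <| by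
    obtain ⟨i, hi, rfl⟩ := Finset.mem_image.mp h
    exact ⟨i, Finset.mem_powerset.mp ht hi, rfl⟩
  have hexp : ∀ c : α → ℝ, (fun ω => rad j ω * ∏ i ∈ s, (1 + c i * rad (ι i) ω)) =
      ∑ t ∈ s.powerset, (∏ i ∈ t, c i) • walsh (insert j (t.image ι)) := fun c => by
    have hfun : (fun ω => rad j ω * ∏ i ∈ s, (1 + c i * rad (ι i) ω)) =
        rad j * fun ω => ∏ i ∈ s, (1 + c i * rad (ι i) ω) := rfl
    rw [hfun, prod_one_add_mul_rad_eq_sum_walsh hι, Finset.mul_sum]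
    refine Finset.sum_congr rfl fun t ht => ?_
    rw [mul_smul_comm, rad_mul_walsh (hjt t ht)]
  have hcard : ∀ t ∈ s.powerset, (insert j (t.image ι)).card = t.card + 1 := fun t ht => by
    rw [Finset.card_insert_of_notMem (hjt t ht),
      Finset.card_image_of_injOn (hι.mono (Finset.mem_powerset.mp ht))]
  have hrhs : (fun ω => ε * rad j ω * ∏ i ∈ s, (1 + ε * c i * rad (ι i) ω)) =
      ε • fun ω => rad j ω * ∏ i ∈ s, (1 + (ε * c i) * rad (ι i) ω) := by
    funext ω; simp [mul_assoc]
  rw [hexp c, map_sum, hrhs, hexp, Finset.smul_sum]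
  refine Finset.sum_congr rfl fun t ht => ?_
  rw [map_smul, hT, hcard t ht, Finset.prod_mul_distrib, Finset.prod_const]
  funext ω
  simp only [Pi.smul_apply, smul_eq_mul, pow_succ]
  ring

end RieszProduct

abbrev coordSigma {ι : Type*} (c : ι → ℕ) : MeasurableSpace CantorGroup :=
  MeasurableSpace.comap (fun ω i => ω (c i)) inferInstance

section CoordSigma

variable {ι : Type*} (c : ι → ℕ)

lemma coordSigma_le : coordSigma c ≤ MeasurableSpace.pi :=
  (measurable_pi_lambda _ fun i => measurable_pi_apply (c i)).comap_le

lemma measurable_rad_coordSigma (i : ι) : Measurable[coordSigma c] (rad (c i)) :=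
  measurable_units_int_cast.comp
    ((measurable_pi_apply i).comp (comap_measurable fun (ω : CantorGroup) (i : ι) => ω (c i)))

lemma one_add_mul_rad_eq_ite (j : ℕ) (e : ℤˣ) (ω : CantorGroup) :
    1 + ((e : ℤ) : ℝ) * rad j ω = if ω j = e then 2 else 0 := by
  rcases Int.units_eq_one_or (ω j) with h | h <;> rcases Int.units_eq_one_or e with he | he <;>
    norm_num [rad, h, he]

lemma comp_coords_mem_adjoin_rad [Finite ι] (h : (ι → ℤˣ) → ℝ) :
    (fun ω => h fun i => ω (c i)) ∈ Algebra.adjoin ℝ (rad '' Set.range c) := by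
  classical
  have := Fintype.ofFinite ι
  have hexp : (fun ω => h fun i => ω (c i)) = ∑ p : ι → ℤˣ,
      (h p / 2 ^ Fintype.card ι) • fun ω => ∏ i, (1 + ((p i : ℤ) : ℝ) * rad (c i) ω) := by
    funext ω
    simp only [Finset.sum_apply, Pi.smul_apply, smul_eq_mul, one_add_mul_rad_eq_ite,
      Fintype.prod_ite_zero, Finset.prod_const, Finset.card_univ]
    rw [Finset.sum_eq_single (fun i => ω (c i)) 
      (fun p _ hp => by rw [if_neg fun hc => hp (funext hc).symm, mul_zero]) (by simp)]
    simp
  rw [hexp, ← Set.image_univ, ← Finset.coe_univ]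
  exact Subalgebra.sum_mem _ fun p _ =>
    Subalgebra.smul_mem _ (prod_one_add_mul_rad_mem_adjoin _ _ _) _

end CoordSigma

lemma condExp_rad_mul_eq_zero {ι : Type*} [Finite ι] {c : ι → ℕ} {μ : Measure CantorGroup}
    [IsFiniteMeasure μ] (hμ : ∀ A : Finset ℕ, A.Nonempty → ∫ ω, walsh A ω ∂μ = 0)
    {S : Set ℕ} {f : CantorGroup → ℝ} {j : ℕ} (hjS : j ∉ S) (hjc : j ∉ Set.range c)
    (hf : f ∈ Algebra.adjoin ℝ (rad '' S)) :
    μ[fun ω => rad j ω * f ω | coordSigma c] =ᵐ[μ] 0 := by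
  refine (ae_eq_condExp_of_forall_setIntegral_eq (coordSigma_le c)
    (integrable_rad_mul j (integrable_of_mem_adjoin_rad μ hf)) (fun _ _ _ => integrableOn_zero)
    (fun s hs _ => ?_) stronglyMeasurable_const.aestronglyMeasurable).symm
  obtain ⟨t, ht, rfl⟩ := hs
  set g : CantorGroup → ℝ := fun ω => t.indicator 1 fun i => ω (c i)
  have hg : g ∈ Algebra.adjoin ℝ (rad '' Set.range c) := comp_coords_mem_adjoin_rad c _
  have hgf : (fun ω => g ω * f ω) ∈ Algebra.adjoin ℝ (rad '' (S ∪ Set.range c)) :=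
    Subalgebra.mul_mem _
      (Algebra.adjoin_mono (Set.image_mono Set.subset_union_right) hg)
      (Algebra.adjoin_mono (Set.image_mono Set.subset_union_left) hf)
  have hind : ∀ ω, ((fun ω i => ω (c i)) ⁻¹' t).indicator (fun ω => rad j ω * f ω) ω =
      rad j ω * (g ω * f ω) := fun ω => by
    by_cases h : (fun i => ω (c i)) ∈ t <;> simp [g, h]
  rw [integral_zero, ← integral_indicator (coordSigma_le c _ ⟨t, ht, rfl⟩)]
  simp only [hind]
  exact (integral_rad_mul_eq_zero_of_mem_adjoin hμ (by simp [hjS, hjc]) hgf).symm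

section HaarSystem

variable {φ : List Bool → ℕ} {ε : ℝ}

lemma rho_injective (hφinj : Function.Injective φ) (hφ2 : ∀ δ, 2 ≤ φ δ) :
    Function.Injective (rho φ) := by
  intro l l' h
  unfold rho at h
  split_ifs at h with hl hl'
  · rw [hl, hl']
  · exact absurd h (by have := hφ2 l'; omega)
  · exact absurd h (by have := hφ2 l; omega)
  · exact hφinj h

lemma length_take_of_mem_range {δ : List Bool} {i : ℕ} (hi : i ∈ Finset.range δ.length) :
    (δ.take i).length = i :=
  List.length_take_of_le (Finset.mem_range.mp hi).le

lemma rho_take_injOn (hρ : Function.Injective (rho φ)) (δ : List Bool) :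
    Set.InjOn (fun i => rho φ (δ.take i)) (Finset.range δ.length) := fun i hi i' hi' h => by
  rw [← length_take_of_mem_range hi, ← length_take_of_mem_range hi', hρ h]

lemma rho_notMem_image_take (hρ : Function.Injective (rho φ)) (δ : List Bool) :
    rho φ δ ∉ (fun i => rho φ (δ.take i)) '' (Finset.range δ.length : Set ℕ) := by
  rintro ⟨i, hi, h⟩
  have hlen := congrArg List.length (hρ h)
  rw [length_take_of_mem_range hi] at hlen
  exact (Finset.mem_range.mp hi).ne hlen

noncomputable def biasedKSys (φ : List Bool → ℕ) (ε : ℝ) (δ : List Bool) (ω : CantorGroup) :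
    ℝ :=
  ε * rad (rho φ δ) ω *
    ∏ i ∈ Finset.range δ.length, (1 + ε * sgn (δ.getD i true) * rad (rho φ (δ.take i)) ω)

lemma map_kSys (hρ : Function.Injective (rho φ))
    {T : (CantorGroup → ℝ) →ₗ[ℝ] (CantorGroup → ℝ)}
    (hT : ∀ A : Finset ℕ, T (walsh A) = fun ω => ε ^ A.card * walsh A ω) (δ : List Bool) :
    T (kSys φ δ) = biasedKSys φ ε δ :=
  map_rad_mul_prod_one_add_mul_rad hT (rho_take_injOn hρ δ) (rho_notMem_image_take hρ δ) _

lemma biasedKSys_eq_rad_mul (φ : List Bool → ℕ) (ε : ℝ) (δ : List Bool) :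
    biasedKSys φ ε δ = fun ω => rad (rho φ δ) ω * (ε * ∏ i ∈ Finset.range δ.length,
      (1 + ε * sgn (δ.getD i true) * rad (rho φ (δ.take i)) ω)) := by
  funext ω
  rw [biasedKSys, mul_left_comm, mul_assoc]

lemma biasedKSys_mem_adjoin_rad (φ : List Bool → ℕ) (ε : ℝ) (δ : List Bool) :
    biasedKSys φ ε δ ∈ Algebra.adjoin ℝ (rad '' (rho φ '' {l | l <+: δ})) := by
  rw [biasedKSys_eq_rad_mul]
  refine Subalgebra.mul_mem _ (Algebra.subset_adjoin ⟨_, ⟨δ, List.prefix_refl δ, rfl⟩, rfl⟩)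
    (Subalgebra.smul_mem _ (Algebra.adjoin_mono (Set.image_mono ?_)
      (prod_one_add_mul_rad_mem_adjoin _ _ _)) ε)
  rintro _ ⟨i, -, rfl⟩
  exact ⟨δ.take i, List.take_prefix i δ, rfl⟩

lemma integrable_biasedKSys (μ : Measure CantorGroup) [IsFiniteMeasure μ] (δ : List Bool) :
    Integrable (biasedKSys φ ε δ) μ :=
  integrable_of_mem_adjoin_rad μ (biasedKSys_mem_adjoin_rad φ ε δ)

lemma measurable_biasedKSys {P : List Bool → Prop} {δ : List Bool} (hP : ∀ l, l <+: δ → P l) :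
    Measurable[coordSigma fun l : {l // P l} => rho φ l] (biasedKSys φ ε δ) :=
  measurable_of_mem_adjoin_rad (by
      rintro _ ⟨l, hl, rfl⟩
      exact measurable_rad_coordSigma (fun l : {l // P l} => rho φ l) ⟨l, hP l hl⟩)
    (biasedKSys_mem_adjoin_rad φ ε δ)

lemma condExp_biasedKSys_eq_zero {μ : Measure CantorGroup} [IsFiniteMeasure μ]
    (hμ : ∀ A : Finset ℕ, A.Nonempty → ∫ ω, walsh A ω ∂μ = 0) (hρ : Function.Injective (rho φ))
    {P : List Bool → Prop} (hP : {l | P l}.Finite) {δ : List Bool} (hδ : ¬ P δ) :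
    μ[biasedKSys φ ε δ | coordSigma fun l : {l // P l} => rho φ l] =ᵐ[μ] 0 := by
  have : Finite {l // P l} := hP.to_subtype
  rw [biasedKSys_eq_rad_mul]
  exact condExp_rad_mul_eq_zero hμ (rho_notMem_image_take hρ δ)
    (by rintro ⟨l, hl⟩; exact hδ (hρ hl ▸ l.2))
    (Subalgebra.smul_mem _ (prod_one_add_mul_rad_mem_adjoin _ _ _) ε)

lemma integral_abs_biasedKSys {μ : Measure CantorGroup} [IsProbabilityMeasure μ]
    (hμ : ∀ A : Finset ℕ, A.Nonempty → ∫ ω, walsh A ω ∂μ = 0) (hρ : Function.Injective (rho φ))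
    (hε0 : 0 ≤ ε) (hε1 : ε ≤ 1) (δ : List Bool) :
    ∫ ω, |biasedKSys φ ε δ ω| ∂μ = ε := by
  have hfactor : ∀ (b : Bool) (j : ℕ) (ω : CantorGroup), 0 ≤ 1 + ε * sgn b * rad j ω := by
    intro b j ω
    have : |ε * sgn b * rad j ω| = ε := by
      rw [abs_mul, abs_mul, abs_sgn, abs_rad, abs_of_nonneg hε0, mul_one, mul_one]
    linarith [neg_abs_le (ε * sgn b * rad j ω)]
  have habs : ∀ ω, |biasedKSys φ ε δ ω| = ε * ∏ i ∈ Finset.range δ.length,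
      (1 + ε * sgn (δ.getD i true) * rad (rho φ (δ.take i)) ω) := fun ω => by
    rw [biasedKSys, abs_mul, abs_mul, abs_rad, abs_of_nonneg hε0, mul_one,
      abs_of_nonneg (Finset.prod_nonneg fun i _ => hfactor _ _ ω)]
  simp only [habs]
  rw [integral_const_mul, integral_prod_one_add_mul_rad hμ (rho_take_injOn hρ δ), mul_one]

lemma monotone_integral_abs_sum_biasedKSys {μ : Measure CantorGroup} [IsFiniteMeasure μ]
    (hμ : ∀ A : Finset ℕ, A.Nonempty → ∫ ω, walsh A ω ∂μ = 0) (hρ : Function.Injective (rho φ))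
    {u : ℕ → List Bool} (hu : Function.Injective u) (hlen : Monotone fun k => (u k).length)
    (a : ℕ → ℝ) :
    Monotone fun n => ∫ ω, |∑ k ∈ Finset.range n, a k * biasedKSys φ ε (u k) ω| ∂μ := by
  -- Unlike `Gsig φ (u k).length`, this σ-algebra also sees the earlier `u j` of the same length.
  refine monotone_integral_abs_sum_of_condExp_eq_zero
    (m := fun k => coordSigma fun l : {l // l.length ≤ (u k).length ∧ l ≠ u k} => rho φ l)
    (fun k => coordSigma_le _) (fun k => integrable_biasedKSys μ _) (fun j k hjk => ?_)
    (fun k => condExp_biasedKSys_eq_zero hμ hρ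
      ((List.finite_length_le Bool _).subset fun l hl => hl.1) fun h => h.2 rfl) a
  refine measurable_biasedKSys fun l hl => ⟨hl.length_le.trans (hlen hjk.le), ?_⟩
  rintro rfl
  have hsame : (u k).length = (u j).length := (hlen hjk.le).antisymm' hl.length_le
  exact hjk.ne (hu (hl.eq_of_length hsame).symm)

end HaarSystem

theorem biased_coin_kSys_monotone_basic_general
    (μ : Measure CantorGroup) [IsProbabilityMeasure μ]
    (hμ : ∀ A : Finset ℕ, A.Nonempty → ∫ ω, walsh A ω ∂μ = 0)
    (φ : List Bool → ℕ) (hφinj : Function.Injective φ)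
    (hφ2 : ∀ δ, 2 ≤ φ δ)
    (ε : ℝ) (hε0 : 0 < ε) (hε1 : ε < 1)
    (T : (CantorGroup → ℝ) →ₗ[ℝ] (CantorGroup → ℝ))
    (hT : ∀ A : Finset ℕ, T (walsh A) = fun ω => ε ^ A.card * walsh A ω)
    (u : ℕ → List Bool) (hu : Function.Bijective u)
    (hlen : ∀ k l, k ≤ l → (u k).length ≤ (u l).length) :
    (∀ δ : List Bool, T (kSys φ δ) = fun ω => ε * rad (rho φ δ) ω *
        ∏ i ∈ Finset.range δ.length,
          (1 + ε * sgn (δ.getD i true) * rad (rho φ (δ.take i)) ω)) ∧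
    (∀ k : ℕ, μ[T (kSys φ (u k)) | Gsig φ (u k).length] =ᵐ[μ] 0) ∧
    (∀ (a : ℕ → ℝ) (m n : ℕ), m ≤ n →
      ∫ ω, |∑ k ∈ Finset.range m, a k * T (kSys φ (u k)) ω| ∂μ ≤
        ∫ ω, |∑ k ∈ Finset.range n, a k * T (kSys φ (u k)) ω| ∂μ) ∧
    (∀ (a : ℕ → ℝ) (n k : ℕ), k < n →
      |a k| ≤ (2 / ε) * ∫ ω, |∑ j ∈ Finset.range n, a j * T (kSys φ (u j)) ω| ∂μ) := by
  have hρ := rho_injective hφinj hφ2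
  have hmono (a : ℕ → ℝ) :=
    monotone_integral_abs_sum_biasedKSys (ε := ε) hμ hρ hu.injective hlen a
  simp only [map_kSys hρ hT]
  refine ⟨fun δ => rfl, fun k => ?_, fun a m n hmn => hmono a hmn, fun a n k hkn => ?_⟩
  · exact condExp_biasedKSys_eq_zero hμ hρ (List.finite_length_lt Bool _) (lt_irrefl _)
  · have hbound := abs_mul_integral_abs_le_of_monotone (fun k => integrable_biasedKSys μ _)
      (hmono a) hkn
    rw [integral_abs_biasedKSys hμ hρ hε0.le hε1.le] at hbound
    rw [div_mul_eq_mul_div, le_div_iff₀ hε0]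
    linarith

/-- With `T_ε` the biased coin operator (acting on Walsh functions by
`T_ε w_A = ε^{|A|} w_A`) and `(k_δ)` the re-indexed Haar-type system, the images satisfy
`T_ε k_δ = ε r_{φ(δ)} ∏_{i=1}^n (1 + ε δ_i r_{φ(δ₁,…,δ_{i−1})})`; arranged in any order `u`
compatible with prefix length they form a martingale difference sequence with respect to the
filtration generated by the previous coordinates, hence a monotone basic sequence in `L¹`,
and consequently the biorthogonal functionals all have norm at most `2/ε`. -/
theorem biased_coin_kSys_monotone_basic
    (μ : Measure CantorGroup) [IsProbabilityMeasure μ]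
    (hμ : ∀ A : Finset ℕ, A.Nonempty → ∫ ω, walsh A ω ∂μ = 0)
    (φ : List Bool → ℕ) (hφinj : Function.Injective φ)
    (hφ2 : ∀ δ, 2 ≤ φ δ)
    (hφmono : ∀ (δ : List Bool) (b : Bool), φ δ < φ (δ ++ [b]))
    (ε : ℝ) (hε0 : 0 < ε) (hε1 : ε < 1)
    (T : (CantorGroup → ℝ) →ₗ[ℝ] (CantorGroup → ℝ))
    (hT : ∀ A : Finset ℕ, T (walsh A) = fun ω => ε ^ A.card * walsh A ω)
    (u : ℕ → List Bool) (hu : Function.Bijective u)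
    (hlen : ∀ k l, k ≤ l → (u k).length ≤ (u l).length) :
    (∀ δ : List Bool, T (kSys φ δ) = fun ω => ε * rad (rho φ δ) ω *
        ∏ i ∈ Finset.range δ.length,
          (1 + ε * sgn (δ.getD i true) * rad (rho φ (δ.take i)) ω)) ∧
    (∀ k : ℕ, μ[T (kSys φ (u k)) | Gsig φ (u k).length] =ᵐ[μ] 0) ∧
    (∀ (a : ℕ → ℝ) (m n : ℕ), m ≤ n →
      ∫ ω, |∑ k ∈ Finset.range m, a k * T (kSys φ (u k)) ω| ∂μ ≤
        ∫ ω, |∑ k ∈ Finset.range n, a k * T (kSys φ (u k)) ω| ∂μ) ∧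
    (∀ (a : ℕ → ℝ) (n k : ℕ), k < n →
      |a k| ≤ (2 / ε) * ∫ ω, |∑ j ∈ Finset.range n, a j * T (kSys φ (u j)) ω| ∂μ) :=
  biased_coin_kSys_monotone_basic_general μ hμ φ hφinj hφ2 ε hε0 hε1 T hT u hu hlen
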